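/- arXiv:2404.10683 — 2 statements merged into one kernel-verified Lean document; each statement's English description precedes it below -/
import Mathlib

section
/- Let I = {0,...,N−1}, V1, V2 ⊆ I, c1, c2 ∈ [0,1], and let P = {x ∈ ℝ^N : x_i ≥ 0 ∀i, ∑_{i∈I} x_i = 1, ∑_{i∈V1} x_i ≥ c1, ∑_{i∈V2} x_i ≥ c2}. Define K1 = V1∩V2, K2 = V1, K3 = V2, K4 = I and the padded standard simplices PSS_{K_j} (with PSS_∅ = {0}). Then every point of the form x = z1·y1 + z2·y2 + z3·y3 + z4·y4 with y_j ∈ PSS_{K_j}, z1 = max(0, c1+c2−1), z2 = max(0, c1−z1), z3 = max(0, c2 − z1 − ∑_{i∈V1∩V2} z2·(y2)_i / 1) where z_{2,∩} = z2·∑_{i∈V1∩V2}(y2)_i, and z4 = 1−z1−z2−z3, lies in P. -/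
def PSS (N : ℕ) (K : Finset (Fin N)) : Set (Fin N → ℝ) :=
  if K = ∅ then {(0 : Fin N → ℝ)}
  else {y | (∀ i, 0 ≤ y i) ∧ (∑ j ∈ K, y j = 1) ∧ ∀ j ∉ K, y j = 0}

lemma PSS_nonneg {N : ℕ} {K : Finset (Fin N)} {y : Fin N → ℝ}
    (h : y ∈ PSS N K) : ∀ i, 0 ≤ y i := by
  unfold PSS at h
  split at h
  · simp only [Set.mem_singleton_iff] at h; subst h; intro i; exact le_refl 0
  · exact h.1

lemma PSS_zero_off {N : ℕ} {K : Finset (Fin N)} {y : Fin N → ℝ}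
    (h : y ∈ PSS N K) : ∀ j ∉ K, y j = 0 := by
  unfold PSS at h
  split at h
  · simp only [Set.mem_singleton_iff] at h; subst h; intro j _; rfl
  · exact h.2.2

lemma PSS_sum_one {N : ℕ} {K : Finset (Fin N)} {y : Fin N → ℝ}
    (h : y ∈ PSS N K) (hK : K ≠ ∅) : ∑ j ∈ K, y j = 1 := by
  unfold PSS at h
  split at h
  · exact absurd ‹K = ∅› hK
  · exact h.2.1

lemma PSS_sum_restrict {N : ℕ} {K A : Finset (Fin N)} {y : Fin N → ℝ}
    (h : y ∈ PSS N K) (hKA : K ⊆ A) : ∑ i ∈ A, y i = ∑ i ∈ K, y i :=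
  (Finset.sum_subset hKA (fun i _ hi => PSS_zero_off h i hi)).symm

lemma PSS_sum_inter {N : ℕ} {K A : Finset (Fin N)} {y : Fin N → ℝ}
    (h : y ∈ PSS N K) : ∑ i ∈ A, y i = ∑ i ∈ A ∩ K, y i := by
  refine (Finset.sum_subset Finset.inter_subset_left ?_).symm
  intro i hiA hi
  exact PSS_zero_off h i (fun hK => hi (Finset.mem_inter.mpr ⟨hiA, hK⟩))

theorem minkowski_sum_subset_polytope
    (N : ℕ) (V1 V2 : Finset (Fin N)) (c1 c2 : ℝ)
    (hc10 : 0 ≤ c1) (hc11 : c1 ≤ 1) (hc20 : 0 ≤ c2) (hc21 : c2 ≤ 1)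
    (hP : ∃ x : Fin N → ℝ, (∀ i, 0 ≤ x i) ∧ (∑ i, x i = 1) ∧
      (c1 ≤ ∑ i ∈ V1, x i) ∧ (c2 ≤ ∑ i ∈ V2, x i))
    (y1 y2 y3 y4 : Fin N → ℝ)
    (h1 : y1 ∈ PSS N (V1 ∩ V2)) (h2 : y2 ∈ PSS N V1)
    (h3 : y3 ∈ PSS N V2) (h4 : y4 ∈ PSS N Finset.univ)
    (z1 z2 z3 z4 : ℝ)
    (hz1 : z1 = max 0 (c1 + c2 - 1)) (hz2 : z2 = max 0 (c1 - z1))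
    (hz3 : z3 = max 0 (c2 - z1 - z2 * ∑ i ∈ V1 ∩ V2, y2 i))
    (hz4 : z4 = 1 - z1 - z2 - z3)
    (x : Fin N → ℝ)
    (hx : x = fun i => z1 * y1 i + z2 * y2 i + z3 * y3 i + z4 * y4 i) :
    (∀ i, 0 ≤ x i) ∧ (∑ i, x i = 1) ∧
      (c1 ≤ ∑ i ∈ V1, x i) ∧ (c2 ≤ ∑ i ∈ V2, x i) := by
  obtain ⟨w, hw0, hw1, hwc1, hwc2⟩ := hP
  have hy1n := PSS_nonneg h1
  have hy2n := PSS_nonneg h2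
  have hy3n := PSS_nonneg h3
  have hy4n := PSS_nonneg h4
  have hz1n : 0 ≤ z1 := hz1 ▸ le_max_left _ _
  have hz3n : 0 ≤ z3 := hz3 ▸ le_max_left _ _
  have hz1le : z1 ≤ c1 := by rw [hz1]; exact max_le hc10 (by linarith)
  have hz2' : z2 = c1 - z1 := by rw [hz2]; exact max_eq_right (by linarith)
  have hz2n : 0 ≤ z2 := by rw [hz2']; linarith
  set a := ∑ i ∈ V1 ∩ V2, y2 i with ha
  have han : 0 ≤ a := Finset.sum_nonneg fun i _ => hy2n i
  have ha1 : a ≤ 1 := by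
    by_cases hV1 : V1 = ∅
    · have he : V1 ∩ V2 = ∅ := by rw [hV1]; simp
      rw [ha, he]; simp
    · calc a ≤ ∑ i ∈ V1, y2 i :=
          Finset.sum_le_sum_of_subset_of_nonneg Finset.inter_subset_left
            (fun i _ _ => hy2n i)
        _ = 1 := PSS_sum_one h2 hV1
  have hz2an : 0 ≤ z2 * a := mul_nonneg hz2n han
  have hz3ge : c2 - z1 - z2 * a ≤ z3 := hz3 ▸ le_max_right _ _
  have hz1ge : c1 + c2 - 1 ≤ z1 := hz1 ▸ le_max_right _ _
  have hz3le : z3 ≤ 1 - c1 := by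
    rw [hz3]
    exact max_le (by linarith) (by linarith)
  have hz4n : 0 ≤ z4 := by rw [hz4, hz2']; linarith
  have hc1V1 : V1 = ∅ → c1 = 0 := by
    intro h; rw [h] at hwc1; simp at hwc1; linarith
  have hc2V2 : V2 = ∅ → c2 = 0 := by
    intro h; rw [h] at hwc2; simp at hwc2; linarith
  have hinter : V1 ∩ V2 = ∅ → c1 + c2 ≤ 1 := by
    intro h
    have hsum : ∑ i ∈ V1 ∪ V2, w i + ∑ i ∈ V1 ∩ V2, w i
        = ∑ i ∈ V1, w i + ∑ i ∈ V2, w i := Finset.sum_union_inter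
    have hle : ∑ i ∈ V1 ∪ V2, w i ≤ 1 := by
      rw [← hw1]
      exact Finset.sum_le_sum_of_subset_of_nonneg (Finset.subset_univ _)
        (fun i _ _ => hw0 i)
    rw [h] at hsum; simp at hsum; linarith
  have hz1z : V1 ∩ V2 = ∅ → z1 = 0 := by
    intro h; rw [hz1]; exact max_eq_left (by linarith [hinter h])
  have hz2z : V1 = ∅ → z2 = 0 := by
    intro h
    have hc1 := hc1V1 h
    have hz1v : z1 = 0 := by rw [hz1, hc1]; exact max_eq_left (by linarith)
    rw [hz2', hc1, hz1v]; ring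
  have hz3z : V2 = ∅ → z3 = 0 := by
    intro h
    have hc2 := hc2V2 h
    have hz1v : z1 = 0 := by rw [hz1, hc2]; exact max_eq_left (by linarith)
    rw [hz3, hc2, hz1v]
    exact max_eq_left (by linarith)
  have hsum1 : ∀ A : Finset (Fin N), V1 ∩ V2 ⊆ A → z1 * ∑ i ∈ A, y1 i = z1 := by
    intro A hA
    by_cases h : V1 ∩ V2 = ∅
    · rw [hz1z h]; ring
    · rw [PSS_sum_restrict h1 hA, PSS_sum_one h1 h, mul_one]
  have hsum2 : ∀ A : Finset (Fin N), V1 ⊆ A → z2 * ∑ i ∈ A, y2 i = z2 := by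
    intro A hA
    by_cases h : V1 = ∅
    · rw [hz2z h]; ring
    · rw [PSS_sum_restrict h2 hA, PSS_sum_one h2 h, mul_one]
  have hsum3 : ∀ A : Finset (Fin N), V2 ⊆ A → z3 * ∑ i ∈ A, y3 i = z3 := by
    intro A hA
    by_cases h : V2 = ∅
    · rw [hz3z h]; ring
    · rw [PSS_sum_restrict h3 hA, PSS_sum_one h3 h, mul_one]
  have huniv : (Finset.univ : Finset (Fin N)) ≠ ∅ := by
    intro h; rw [h] at hw1; simp at hw1
  have hsum4 : ∑ i, y4 i = 1 := PSS_sum_one h4 huniv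
  have hy2V2 : ∑ i ∈ V2, y2 i = a := by
    rw [PSS_sum_inter h2, ha, Finset.inter_comm]
  -- the four parts
  refine ⟨?_, ?_, ?_, ?_⟩
  · intro i
    rw [hx]
    have := hy1n i; have := hy2n i; have := hy3n i; have := hy4n i
    dsimp only
    nlinarith [mul_nonneg hz1n (hy1n i), mul_nonneg hz2n (hy2n i),
      mul_nonneg hz3n (hy3n i), mul_nonneg hz4n (hy4n i)]
  · rw [hx]
    simp only [Finset.sum_add_distrib, ← Finset.mul_sum]
    rw [hsum1 Finset.univ (Finset.subset_univ _),
      hsum2 Finset.univ (Finset.subset_univ _),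
      hsum3 Finset.univ (Finset.subset_univ _), hsum4]
    rw [hz4]; ring
  · rw [hx]
    simp only [Finset.sum_add_distrib, ← Finset.mul_sum]
    rw [hsum1 V1 Finset.inter_subset_left, hsum2 V1 (le_refl _)]
    have h3nn : 0 ≤ z3 * ∑ i ∈ V1, y3 i :=
      mul_nonneg hz3n (Finset.sum_nonneg fun i _ => hy3n i)
    have h4nn : 0 ≤ z4 * ∑ i ∈ V1, y4 i :=
      mul_nonneg hz4n (Finset.sum_nonneg fun i _ => hy4n i)
    rw [hz2']
    linarith
  · by_cases hV2 : V2 = ∅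
    · rw [hV2, hc2V2 hV2]; simp
    · rw [hx]
      simp only [Finset.sum_add_distrib, ← Finset.mul_sum]
      rw [hsum1 V2 Finset.inter_subset_right, hsum3 V2 (le_refl _), hy2V2]
      have h4nn : 0 ≤ z4 * ∑ i ∈ V2, y4 i :=
        mul_nonneg hz4n (Finset.sum_nonneg fun i _ => hy4n i)
      linarith
end

section
/- Let x be in the standard simplex over I with ∑_{V1} x_i ≥ c1 and ∑_{V2} x_i ≥ c2, where c1, c2 ∈ [0,1]. With z1 = max(0, c1+c2−1), there exists a decomposition x = u + v + w + r into nonnegative vectors such that: u is supported on V1∩V2 with ∑ u_i = z1; v is supported on V1 with ∑ v_i = max(0, c1 − z1); w is supported on V2 with ∑ w_i = max(0, c2 − z1 − ∑_{i∈V1∩V2} v_i); and r ≥ 0 with ∑ r_i = 1 − ∑ u_i − ∑ v_i − ∑ w_i ≥ 0. -/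
/-- Extraction lemma: from a nonnegative vector `y` we can extract a nonnegative
vector `g ≤ y` supported on `K` with total sum `t`, provided `0 ≤ t ≤ ∑_{K} y`. -/
lemma extract_part {N : ℕ} (K : Finset (Fin N)) (y : Fin N → ℝ)
    (hy : ∀ i, 0 ≤ y i) (t : ℝ) (ht0 : 0 ≤ t) (ht : t ≤ ∑ i ∈ K, y i) :
    ∃ g : Fin N → ℝ, (∀ i, 0 ≤ g i) ∧ (∀ i, g i ≤ y i) ∧
      (∀ i ∉ K, g i = 0) ∧ (∑ i, g i = t) := by
  set S := ∑ i ∈ K, y i with hS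
  by_cases hS0 : S = 0
  · have ht' : t = 0 := le_antisymm (hS0 ▸ ht) ht0
    exact ⟨fun _ => 0, fun i => le_refl 0, fun i => hy i, fun i _ => rfl, by
      simp [ht']⟩
  · have hSpos : 0 < S := lt_of_le_of_ne (Finset.sum_nonneg fun i _ => hy i) (Ne.symm hS0)
    refine ⟨fun i => if i ∈ K then y i * (t / S) else 0, ?_, ?_, ?_, ?_⟩
    · intro i
      by_cases h : i ∈ K <;> simp [h]
      exact mul_nonneg (hy i) (div_nonneg ht0 hSpos.le)
    · intro i
      by_cases h : i ∈ K <;> simp [h]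
      · calc y i * (t / S) ≤ y i * 1 := by
              apply mul_le_mul_of_nonneg_left _ (hy i)
              rw [div_le_one hSpos]; exact ht
          _ = y i := mul_one _
      · exact hy i
    · intro i h; simp [h]
    · have : ∑ i, (if i ∈ K then y i * (t / S) else 0) = ∑ i ∈ K, y i * (t / S) := by
        rw [Finset.sum_ite_mem, Finset.univ_inter]
      rw [this, ← Finset.sum_mul, ← hS, mul_div_cancel₀ _ hS0]

/-- If `g` vanishes off `K`, its sum over `K` equals its total sum. -/
lemma sum_eq_of_support {N : ℕ} (K : Finset (Fin N)) (g : Fin N → ℝ)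
    (h : ∀ i ∉ K, g i = 0) : ∑ i ∈ K, g i = ∑ i, g i :=
  Finset.sum_subset (Finset.subset_univ K) (fun i _ hi => h i hi)

theorem feasible_point_decomposition
    (N : ℕ) (V1 V2 : Finset (Fin N)) (c1 c2 : ℝ)
    (hc10 : 0 ≤ c1) (hc11 : c1 ≤ 1) (hc20 : 0 ≤ c2) (hc21 : c2 ≤ 1)
    (x : Fin N → ℝ) (hx0 : ∀ i, 0 ≤ x i) (hx1 : ∑ i, x i = 1)
    (hxc1 : c1 ≤ ∑ i ∈ V1, x i) (hxc2 : c2 ≤ ∑ i ∈ V2, x i) :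
    ∃ u v w r : Fin N → ℝ,
      (∀ i, 0 ≤ u i) ∧ (∀ i, 0 ≤ v i) ∧ (∀ i, 0 ≤ w i) ∧ (∀ i, 0 ≤ r i) ∧
      (∀ i ∉ V1 ∩ V2, u i = 0) ∧ (∀ i ∉ V1, v i = 0) ∧ (∀ i ∉ V2, w i = 0) ∧
      (∑ i, u i = max 0 (c1 + c2 - 1)) ∧
      (∑ i, v i = max 0 (c1 - max 0 (c1 + c2 - 1))) ∧
      (∑ i, w i = max 0 (c2 - max 0 (c1 + c2 - 1) - ∑ i ∈ V1 ∩ V2, v i)) ∧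
      (x = fun i => u i + v i + w i + r i) ∧
      (∑ i, r i = 1 - (∑ i, u i) - (∑ i, v i) - (∑ i, w i)) ∧
      (0 ≤ ∑ i, r i) := by
  set z1 := max 0 (c1 + c2 - 1) with hz1
  -- Step 1: sum over V1 ∩ V2 is large enough
  have hunion : ∑ i ∈ V1 ∪ V2, x i ≤ 1 := by
    rw [← hx1]
    exact Finset.sum_le_sum_of_subset_of_nonneg (Finset.subset_univ _)
      (fun i _ _ => hx0 i)
  have hinter : c1 + c2 - 1 ≤ ∑ i ∈ V1 ∩ V2, x i := by
    have := Finset.sum_union_inter (s₁ := V1) (s₂ := V2) (f := x)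
    linarith
  have hz1x : z1 ≤ ∑ i ∈ V1 ∩ V2, x i := by
    apply max_le (Finset.sum_nonneg fun i _ => hx0 i) hinter
  obtain ⟨u, hu0, hux, husupp, husum⟩ :=
    extract_part (V1 ∩ V2) x hx0 z1 (le_max_left _ _) hz1x
  -- Step 2
  set x1 := fun i => x i - u i with hx1def
  have hx10 : ∀ i, 0 ≤ x1 i := fun i => sub_nonneg.mpr (hux i)
  have hz1c1 : z1 ≤ c1 := max_le hc10 (by linarith)
  have husuppV1 : ∀ i ∉ V1, u i = 0 := fun i hi =>
    husupp i (fun h => hi (Finset.mem_inter.mp h).1)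
  have husumV1 : ∑ i ∈ V1, u i = z1 := by
    rw [sum_eq_of_support V1 u husuppV1, husum]
  have hx1V1 : ∑ i ∈ V1, x1 i = (∑ i ∈ V1, x i) - z1 := by
    simp [hx1def, Finset.sum_sub_distrib, husumV1]
  have ht2 : max 0 (c1 - z1) = c1 - z1 := max_eq_right (by linarith)
  obtain ⟨v, hv0, hvx, hvsupp, hvsum⟩ :=
    extract_part V1 x1 hx10 (c1 - z1) (by linarith) (by rw [hx1V1]; linarith)
  -- Step 3
  set x2 := fun i => x1 i - v i with hx2def
  have hx20 : ∀ i, 0 ≤ x2 i := fun i => sub_nonneg.mpr (hvx i)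
  have husuppV2 : ∀ i ∉ V2, u i = 0 := fun i hi =>
    husupp i (fun h => hi (Finset.mem_inter.mp h).2)
  have husumV2 : ∑ i ∈ V2, u i = z1 := by
    rw [sum_eq_of_support V2 u husuppV2, husum]
  have hvV2 : ∑ i ∈ V2, v i = ∑ i ∈ V1 ∩ V2, v i := by
    refine (Finset.sum_subset Finset.inter_subset_right ?_).symm
    intro i hi hni
    exact hvsupp i (fun h => hni (Finset.mem_inter.mpr ⟨h, hi⟩))
  have hx2V2 : ∑ i ∈ V2, x2 i = (∑ i ∈ V2, x i) - z1 - ∑ i ∈ V1 ∩ V2, v i := by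
    simp [hx2def, hx1def, Finset.sum_sub_distrib, husumV2, hvV2]
  set t3 := max 0 (c2 - z1 - ∑ i ∈ V1 ∩ V2, v i) with ht3
  have ht3le : t3 ≤ ∑ i ∈ V2, x2 i := by
    apply max_le (Finset.sum_nonneg fun i _ => hx20 i)
    rw [hx2V2]; linarith
  obtain ⟨w, hw0, hwx, hwsupp, hwsum⟩ :=
    extract_part V2 x2 hx20 t3 (le_max_left _ _) ht3le
  -- Assemble
  set r := fun i => x2 i - w i with hrdef
  have hr0 : ∀ i, 0 ≤ r i := fun i => sub_nonneg.mpr (hwx i)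
  have hrsum : ∑ i, r i = 1 - (∑ i, u i) - (∑ i, v i) - (∑ i, w i) := by
    simp [hrdef, hx2def, hx1def, Finset.sum_sub_distrib, hx1]
  refine ⟨u, v, w, r, hu0, hv0, hw0, hr0, husupp, hvsupp, hwsupp,
    husum, by rw [hvsum, ht2], hwsum, ?_, hrsum, ?_⟩
  · funext i; simp [hrdef, hx2def, hx1def]
  · exact Finset.sum_nonneg fun i _ => hr0 i
end
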